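/- arXiv:2310.01872 — 3 statements merged into one kernel-verified Lean document; each statement's English description precedes it below -/
import Mathlib

section
/- Let q be a prime power with prime characteristic p, and let n ≥ 1 be an integer with p ∤ n. Then for every a ∈ F_p one has |S_a(n)| = |S_0(n)|; in particular all the sets S_a(n), a ∈ F_p, have the same cardinality. -/
open Polynomial

/-- The trace of a monic irreducible polynomial `f = xⁿ + a_{n-1}x^{n-1} + … + a₀`
over a finite field of characteristic `p`: `Tr(f) = -Tr_{q/p}(a_{n-1})`. -/
noncomputable def polyTrace (F : Type*) [Field F] [Fintype F] (p : ℕ) [CharP F p]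
    (f : F[X]) : ZMod p :=
  letI : Algebra (ZMod p) F := ZMod.algebra F p
  Neg.neg (Algebra.trace (ZMod p) F (f.coeff (f.natDegree - 1)))

/-- `S_a(n)`: the set of monic irreducible polynomials of degree `n` over `F_q`
with trace `a ∈ F_p`. -/
def traceSet (F : Type*) [Field F] [Fintype F] (p : ℕ) [CharP F p]
    (a : ZMod p) (n : ℕ) : Set F[X] :=
  {f : F[X] | f.Monic ∧ Irreducible f ∧ f.natDegree = n ∧ polyTrace F p f = a}

section Aux

variable {F : Type*} [Field F] [Fintype F] {p : ℕ} [Fact p.Prime] [CharP F p]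

omit [Fintype F] [Fact p.Prime] [CharP F p] in
lemma coeff_comp_X_add_C' {f : F[X]} (hf : f.Monic) {n : ℕ} (hn : 1 ≤ n)
    (hd : f.natDegree = n) (c : F) :
    (f.comp (X + C c)).coeff (n - 1) = f.coeff (n - 1) + n * c := by
  rw [← taylor_apply, taylor_coeff]
  have hdeg : (hasseDeriv (n - 1) f).natDegree < 2 := by
    have := natDegree_hasseDeriv_le f (n - 1); omega
  rw [eval_eq_sum_range' hdeg, Finset.sum_range_succ, Finset.sum_range_succ,
    Finset.sum_range_zero, hasseDeriv_coeff, hasseDeriv_coeff]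
  have h1 : 1 + (n - 1) = n := by omega
  have h0 : 0 + (n - 1) = n - 1 := by omega
  have hch : n.choose (n - 1) = n := by
    rw [← Nat.choose_symm (by omega : n - 1 ≤ n)]
    simp [Nat.sub_sub_self hn]
  rw [h1, h0, Nat.choose_self, hch, ← hd, hf.coeff_natDegree, hd]
  push_cast
  ring

/-- abbreviation for the absolute trace with the fixed algebra structure -/
noncomputable def trF (F : Type*) [Field F] [Fintype F] (p : ℕ) [CharP F p] (c : F) : ZMod p :=
  letI : Algebra (ZMod p) F := ZMod.algebra F p
  Algebra.trace (ZMod p) F c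


lemma polyTrace_comp {f : F[X]} (hf : f.Monic) {n : ℕ} (hn : 1 ≤ n)
    (hd : f.natDegree = n) (c : F) :
    polyTrace F p (f.comp (X + C c)) = polyTrace F p f - n * trF F p c := by
  letI : Algebra (ZMod p) F := ZMod.algebra F p
  have hdc : (f.comp (X + C c)).natDegree = n := by
    rw [natDegree_comp, natDegree_X_add_C, mul_one, hd]
  unfold polyTrace trF
  rw [hdc, hd, coeff_comp_X_add_C' hf hn hd]
  have hnc : ((n : F) * c) = (n : ZMod p) • c := by
    rw [Algebra.smul_def, map_natCast]
  rw [map_add, hnc, map_smul, smul_eq_mul]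
  ring


lemma comp_mem_traceSet {f : F[X]} {a : ZMod p} {n : ℕ} (hn : 1 ≤ n)
    (hmem : f ∈ traceSet F p a n) (c : F) :
    f.comp (X + C c) ∈ traceSet F p (a - n * trF F p c) n := by
  obtain ⟨hm, hi, hd, ht⟩ := hmem
  refine ⟨hm.comp_X_add_C c, ?_, ?_, ?_⟩
  · have : f.comp (X + C c) = (algEquivAevalXAddC c) f := by
      simp [algEquivAevalXAddC_apply, comp_eq_aeval]
    rw [this]
    exact (MulEquiv.irreducible_iff (algEquivAevalXAddC c : F[X] ≃ₐ[F] F[X])).mpr hi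
  · rw [natDegree_comp, natDegree_X_add_C, mul_one, hd]
  · rw [polyTrace_comp hm hn hd, ht]

end Aux

theorem trace_count_balanced (F : Type*) [Field F] [Fintype F]
    (p : ℕ) [Fact p.Prime] [CharP F p] (n : ℕ) (hn : 1 ≤ n) (hpn : ¬ p ∣ n)
    (a : ZMod p) :
    (traceSet F p a n).ncard = (traceSet F p 0 n).ncard := by
  letI : Algebra (ZMod p) F := ZMod.algebra F p
  haveI : FiniteDimensional (ZMod p) F := Module.Finite.of_finite
  have hsurj : Function.Surjective (trF F p) := Algebra.trace_surjective (ZMod p) F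
  have hu : (n : ZMod p) ≠ 0 := by
    rwa [Ne, ZMod.natCast_eq_zero_iff]
  obtain ⟨c, hc⟩ := hsurj (a * (n : ZMod p)⁻¹)
  have hnc : (n : ZMod p) * trF F p c = a := by
    rw [hc, ← mul_assoc, mul_comm (n : ZMod p) a, mul_assoc,
      mul_inv_cancel₀ hu, mul_one]
  have himg : traceSet F p 0 n = (fun f => f.comp (X + C c)) '' traceSet F p a n := by
    ext g
    constructor
    · intro hg
      refine ⟨g.comp (X + C (-c)), ?_, ?_⟩
      · have := comp_mem_traceSet hn hg (-c)
        have htr : (0 : ZMod p) - n * trF F p (-c) = a := by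
          unfold trF at hnc ⊢
          rw [map_neg]
          rw [← hnc]; ring
        rwa [htr] at this
      · simp only [comp_assoc]
        simp [comp_assoc, add_comp, X_comp, C_comp]
    · rintro ⟨f, hf, rfl⟩
      have := comp_mem_traceSet hn hf c
      rwa [show a - n * trF F p c = 0 by rw [hnc]; ring] at this
  rw [himg]
  refine (Set.ncard_image_of_injective _ ?_).symm
  intro f g hfg
  have hfg' : (algEquivAevalXAddC c) f = (algEquivAevalXAddC c) g := by
    simpa [algEquivAevalXAddC_apply, comp_eq_aeval] using hfg
  exact (algEquivAevalXAddC c).injective hfg'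
end

section
/- Let q be an odd prime power, u, v ∈ F_q with u ≠ v, and let F = Σ_{i=0}^n F_i x^i be a monic irreducible polynomial of degree n ≥ 1 over F_q. Define the polynomial F^Q(x) := Σ_{i=0}^n F_i (x^2 − uv)^i (2x − (u+v))^{n−i} ∈ F_q[x]. Then F^Q is irreducible over F_q if and only if F(u)·F(v) is a non-square in F_q (equivalently, (F(u)F(v))^{(q−1)/2} = −1). -/
open Polynomial

/-!
Let `α` be the root of `f` in `K = F[X]/(f)` and put `s = (α - u)(α - v)`. Since
`β² - uv - α(2β - (u + v)) = (β - α)² - s`, any `β` with `(β - α)² = s` is a root of `f^Q`.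
If `s` is a square in `K`, such a root lies in `K`, of degree `n` over `F`, which is impossible
for an irreducible polynomial of degree `2n`. Otherwise `β = α + √s` generates the quadratic
extension of `K` (as `α = Q(β)`), which has degree `2n` over `F`, so `f^Q` is the minimal
polynomial of `β`. Finally `N_{K/F}(α - w) = (-1)^n f(w)`, and in a finite extension of finite
fields of odd characteristic `x` is a square iff `N(x)` is: the norm is the power
`x^((|K| - 1)/(q - 1))`, so Euler's criteria in `K` and in `F` agree.
-/

/-- The rational transform `f^Q = Σ_{i=0}^{deg f} f_i g^i h^{deg f - i}` of a monic
polynomial `f` with the rational function `Q = g/h`. -/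
noncomputable def ratTransform {F : Type*} [Field F] (g h f : F[X]) : F[X] :=
  ∑ i ∈ Finset.range (f.natDegree + 1), C (f.coeff i) * g ^ i * h ^ (f.natDegree - i)

theorem PowerBasis.norm_gen_sub_algebraMap {K S : Type*} [Field K] [CommRing S]
    [Algebra K S] (pb : PowerBasis K S) (c : K) :
    Algebra.norm K (pb.gen - algebraMap K S c) = (-1) ^ pb.dim * (minpoly K pb.gen).eval c := by
  have hint : IsIntegral K (pb.gen - algebraMap K S c) :=
    pb.isIntegral_gen.sub isIntegral_algebraMap
  have htop : Algebra.adjoin K {pb.gen - algebraMap K S c} = ⊤ := by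
    refine PowerBasis.adjoin_eq_top_of_gen_mem_adjoin (B := pb) ?_
    simpa using add_mem (Algebra.self_mem_adjoin_singleton K (pb.gen - algebraMap K S c))
      (Subalgebra.algebraMap_mem _ c)
  have hdim : (PowerBasis.ofAdjoinEqTop hint htop).dim = pb.dim := by
    rw [← PowerBasis.finrank, ← PowerBasis.finrank]
  have := Algebra.PowerBasis.norm_gen_eq_coeff_zero_minpoly (PowerBasis.ofAdjoinEqTop hint htop)
  rw [PowerBasis.ofAdjoinEqTop_gen, hdim, minpoly.sub_algebraMap, coeff_zero_eq_eval_zero,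
    eval_comp] at this
  simpa using this

theorem AdjoinRoot.norm_root_sub_algebraMap {K : Type*} [Field K] {f : K[X]} (hf : f.Monic)
    (c : K) :
    Algebra.norm K (root f - algebraMap K (AdjoinRoot f) c) = (-1) ^ f.natDegree * f.eval c := by
  simpa [minpoly_root hf.ne_zero, hf.leadingCoeff] using
    (AdjoinRoot.powerBasis' hf).norm_gen_sub_algebraMap c

theorem FiniteField.isSquare_norm_iff {K L : Type*} [Field K] [Field L] [Algebra K L] [Finite L]
    (hK : ringChar K ≠ 2) (x : L) : IsSquare (Algebra.norm K x) ↔ IsSquare x := by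
  have := Fintype.ofFinite L
  have := Finite.of_injective _ (algebraMap K L).injective
  have := Fintype.ofFinite K
  rcases eq_or_ne x 0 with rfl | hx
  · simp
  have hL : ringChar L ≠ 2 := Algebra.ringChar_eq K L ▸ hK
  obtain ⟨m, hm⟩ := Nat.odd_iff.2 (FiniteField.odd_card_of_char_ne_two hK)
  obtain ⟨k, hk⟩ : Fintype.card K - 1 ∣ Fintype.card L - 1 := by
    rw [Module.card_eq_pow_finrank (K := K) (V := L)]
    exact Nat.sub_one_dvd_pow_sub_one _ _
  have hkdiv : (Nat.card L - 1) / (Nat.card K - 1) = k := by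
    rw [Nat.card_eq_fintype_card, Nat.card_eq_fintype_card, hk]
    exact Nat.mul_div_cancel_left k (by have := Fintype.one_lt_card (α := K); omega)
  have hhalf : Fintype.card L / 2 = k * (Fintype.card K / 2) := by
    have hLodd : Fintype.card L = 2 * (m * k) + 1 := by
      have : 0 < Fintype.card L := Fintype.card_pos
      rw [hm, Nat.add_sub_cancel, mul_assoc] at hk
      omega
    rw [hLodd, hm, show (2 * m + 1) / 2 = m by omega, mul_comm k]
    omega
  rw [FiniteField.isSquare_iff hK ((Algebra.norm_ne_zero_iff).2 hx),
    FiniteField.isSquare_iff hL hx, hhalf, pow_mul, ← hkdiv,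
    ← FiniteField.algebraMap_norm_eq_pow, ← map_pow (algebraMap K L),
    map_eq_one_iff _ (algebraMap K L).injective]

section RatTransform

variable {F : Type*} [Field F]

theorem aeval_ratTransform {A : Type*} [CommRing A] [Algebra F A] {g h : F[X]} (f : F[X])
    {β γ : A} (hβ : aeval β g = γ * aeval β h) :
    aeval β (ratTransform g h f) = aeval β h ^ f.natDegree * aeval γ f := by
  rw [ratTransform, map_sum, aeval_eq_sum_range (p := f), Finset.mul_sum]
  refine Finset.sum_congr rfl fun i hi => ?_
  have hi : i ≤ f.natDegree := Finset.mem_range_succ_iff.mp hi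
  rw [map_mul, map_mul, aeval_C, map_pow, map_pow, hβ, Algebra.smul_def, mul_pow,
    ← Nat.add_sub_cancel' hi, pow_add, Nat.add_sub_cancel_left]
  ring

theorem ratTransform_sub_pow_natDegree {g h f : F[X]} (hf : f.Monic) :
    ratTransform g h f - g ^ f.natDegree =
      ∑ i ∈ Finset.range f.natDegree, C (f.coeff i) * g ^ i * h ^ (f.natDegree - i) := by
  rw [ratTransform, Finset.sum_range_succ, hf.coeff_natDegree, Nat.sub_self]
  simp

theorem degree_ratTransform_sub_pow_lt {g h f : F[X]} (hg : g.Monic)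
    (hgh : h.natDegree < g.natDegree) (hf : f.Monic) :
    (ratTransform g h f - g ^ f.natDegree).degree < (g ^ f.natDegree).degree := by
  rw [ratTransform_sub_pow_natDegree hf, degree_eq_natDegree (hg.pow _).ne_zero,
    hg.natDegree_pow]
  refine (degree_sum_le _ _).trans_lt
    ((Finset.sup_lt_iff (WithBot.bot_lt_coe _)).2 fun i hi => ?_)
  refine degree_le_natDegree.trans_lt (WithBot.coe_lt_coe.2 ?_)
  obtain ⟨j, hj⟩ := Nat.exists_eq_add_of_lt (Finset.mem_range.1 hi)
  calc _ ≤ (C (f.coeff i) * g ^ i).natDegree + (h ^ (f.natDegree - i)).natDegree :=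
        natDegree_mul_le
    _ ≤ i * g.natDegree + (f.natDegree - i) * h.natDegree :=
        add_le_add (natDegree_C_mul_le _ _ |>.trans natDegree_pow_le) natDegree_pow_le
    _ < f.natDegree * g.natDegree := by
        rw [hj, show i + j + 1 - i = j + 1 by omega]
        nlinarith

theorem ratTransform_monic {g h f : F[X]} (hg : g.Monic) (hgh : h.natDegree < g.natDegree)
    (hf : f.Monic) : (ratTransform g h f).Monic := by
  simpa using (hg.pow f.natDegree).add_of_left (degree_ratTransform_sub_pow_lt hg hgh hf)

theorem natDegree_ratTransform {g h f : F[X]} (hg : g.Monic) (hgh : h.natDegree < g.natDegree)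
    (hf : f.Monic) : (ratTransform g h f).natDegree = g.natDegree * f.natDegree := by
  rw [← add_sub_cancel (g ^ f.natDegree) (ratTransform g h f),
    natDegree_add_eq_left_of_degree_lt (degree_ratTransform_sub_pow_lt hg hgh hf),
    hg.natDegree_pow, mul_comm]

end RatTransform

theorem irreducible_of_aeval_eq_zero_of_natDegree_le {F A : Type*} [Field F] [Field A]
    [Algebra F A] {p : F[X]} {x : A} (hx : IsIntegral F x) (hp : p.Monic) (hpx : aeval x p = 0)
    (hdeg : p.natDegree ≤ (minpoly F x).natDegree) : Irreducible p := by
  rw [eq_of_monic_of_dvd_of_natDegree_le (minpoly.monic hx) hp (minpoly.dvd F x hpx) hdeg]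
  exact minpoly.irreducible hx

theorem IntermediateField.eq_top_of_mem_of_adjoin_eq_top {F K L : Type*} [Field F] [CommRing K]
    [Field L] [Algebra F K] [Algebra K L] [Algebra F L] [IsScalarTower F K L] {α : K} {t : L}
    (hα : Algebra.adjoin F {α} = ⊤) (ht : Algebra.adjoin K {t} = ⊤)
    {E : IntermediateField F L} (hαE : algebraMap K L α ∈ E) (htE : t ∈ E) : E = ⊤ := by
  have hK (x : K) : algebraMap K L x ∈ E := by
    have hx : x ∈ Algebra.adjoin F {α} := hα ▸ Algebra.mem_top
    induction hx using Algebra.adjoin_induction with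
    | mem x hx => rwa [Set.mem_singleton_iff.1 hx]
    | algebraMap c => rw [← IsScalarTower.algebraMap_apply]; exact E.algebraMap_mem c
    | add x y _ _ hx hy => rw [map_add]; exact add_mem hx hy
    | mul x y _ _ hx hy => rw [map_mul]; exact mul_mem hx hy
  suffices ∀ y, y ∈ E from eq_top_iff.2 fun y _ => this y
  intro y
  have hy : y ∈ Algebra.adjoin K {t} := ht ▸ Algebra.mem_top
  induction hy using Algebra.adjoin_induction with
  | mem y hy => rwa [Set.mem_singleton_iff.1 hy]
  | algebraMap c => exact hK c
  | add x y _ _ hx hy => exact add_mem hx hy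
  | mul x y _ _ hx hy => exact mul_mem hx hy

section QuadraticTransform

variable {F : Type*} [Field F] (u v : F)

theorem ratTransform_quadratic_monic {f : F[X]} (hf : f.Monic) :
    (ratTransform (X ^ 2 - C (u * v)) (C 2 * X - C (u + v)) f).Monic :=
  ratTransform_monic (monic_X_pow_sub_C _ two_ne_zero)
    (by rw [natDegree_X_pow_sub_C]; compute_degree!) hf

theorem natDegree_ratTransform_quadratic {f : F[X]} (hf : f.Monic) :
    (ratTransform (X ^ 2 - C (u * v)) (C 2 * X - C (u + v)) f).natDegree = 2 * f.natDegree := by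
  rw [natDegree_ratTransform (monic_X_pow_sub_C _ two_ne_zero)
    (by rw [natDegree_X_pow_sub_C]; compute_degree!) hf, natDegree_X_pow_sub_C]

variable {u v}

theorem eq_algebraMap_of_aeval_eq_zero {L : Type*} [Field L] [Algebra F L] (h2 : (2 : F) ≠ 0)
    {β : L} (hβ : aeval β (C 2 * X - C (u + v)) = 0) : β = algebraMap F L ((u + v) / 2) := by
  have h2L : (2 : L) ≠ 0 := by
    rw [← map_ofNat (algebraMap F L) 2]
    exact (_root_.map_ne_zero _).2 h2
  simp only [map_sub, map_mul, map_add, aeval_X, aeval_C, map_ofNat] at hβ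
  rw [map_div₀, map_add, map_ofNat, eq_div_iff h2L]
  linear_combination hβ

variable {A : Type*} [CommRing A] [Algebra F A] {a β : A}

theorem aeval_sq_sub_C_eq_mul_aeval
    (hβ : (β - a) ^ 2 = (a - algebraMap F A u) * (a - algebraMap F A v)) :
    aeval β (X ^ 2 - C (u * v)) = a * aeval β (C 2 * X - C (u + v)) := by
  simp only [map_sub, map_mul, map_pow, map_add, aeval_X, aeval_C, map_ofNat]
  linear_combination hβ

theorem aeval_ratTransform_quadratic_eq_zero {f : F[X]} (ha : aeval a f = 0)
    (hβ : (β - a) ^ 2 = (a - algebraMap F A u) * (a - algebraMap F A v)) :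
    aeval β (ratTransform (X ^ 2 - C (u * v)) (C 2 * X - C (u + v)) f) = 0 := by
  rw [aeval_ratTransform f (aeval_sq_sub_C_eq_mul_aeval hβ), ha, mul_zero]

end QuadraticTransform

section Irreducibility

open AdjoinRoot IntermediateField

variable {F : Type*} [Field F] {u v : F} {f : F[X]}

theorem not_irreducible_ratTransform_of_isSquare (hf : f.Monic) (hdeg : 0 < f.natDegree)
    (hs : IsSquare ((root f - algebraMap F (AdjoinRoot f) u) *
      (root f - algebraMap F (AdjoinRoot f) v))) :
    ¬ Irreducible (ratTransform (X ^ 2 - C (u * v)) (C 2 * X - C (u + v)) f) := by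
  intro hQ
  obtain ⟨τ, hτ⟩ := hs
  have hroot : aeval (root f + τ) (ratTransform (X ^ 2 - C (u * v)) (C 2 * X - C (u + v)) f) = 0 :=
    aeval_ratTransform_quadratic_eq_zero (by rw [aeval_eq, mk_self]) (by rw [hτ]; ring)
  have := hf.finite_adjoinRoot
  have := AdjoinRoot.nontrivial f (by rw [degree_eq_natDegree hf.ne_zero]; exact_mod_cast hdeg.ne')
  have hle := minpoly.natDegree_le (A := F) (root f + τ)
  rw [← minpoly.eq_of_irreducible_of_monic hQ hroot (ratTransform_quadratic_monic u v hf),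
    natDegree_ratTransform_quadratic u v hf, (AdjoinRoot.isAdjoinRootMonic f hf).finrank] at hle
  omega

theorem irreducible_ratTransform_of_not_isSquare (h2 : (2 : F) ≠ 0) (hf : f.Monic)
    [Fact (Irreducible f)]
    (hs : ¬ IsSquare ((root f - algebraMap F (AdjoinRoot f) u) *
      (root f - algebraMap F (AdjoinRoot f) v))) :
    Irreducible (ratTransform (X ^ 2 - C (u * v)) (C 2 * X - C (u + v)) f) := by
  set K := AdjoinRoot f
  set α : K := root f
  set s := (α - algebraMap F K u) * (α - algebraMap F K v)
  have : Fact (Irreducible (X ^ 2 - C s)) :=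
    ⟨X_pow_sub_C_irreducible_of_prime Nat.prime_two fun b hb => hs ⟨b, by rw [← hb, sq]⟩⟩
  set L := AdjoinRoot (X ^ 2 - C s)
  set t : L := root (X ^ 2 - C s)
  have ht : t ^ 2 = algebraMap K L s := by
    have h := eval₂_root (X ^ 2 - C s)
    rwa [eval₂_sub, eval₂_X_pow, eval₂_C, ← AdjoinRoot.algebraMap_eq, sub_eq_zero] at h
  set β := algebraMap K L α + t
  have hβ : (β - algebraMap K L α) ^ 2 =
      (algebraMap K L α - algebraMap F L u) * (algebraMap K L α - algebraMap F L v) := by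
    simp [β, ht, s, IsScalarTower.algebraMap_apply F K L]
  have hroot : aeval β (ratTransform (X ^ 2 - C (u * v)) (C 2 * X - C (u + v)) f) = 0 :=
    aeval_ratTransform_quadratic_eq_zero
      (by rw [aeval_algebraMap_apply, aeval_eq, mk_self, map_zero]) hβ
  have hden : aeval β (C 2 * X - C (u + v)) ≠ 0 := fun h0 =>
    hs ⟨algebraMap F K ((u + v) / 2) - α, (algebraMap K L).injective <| by
      rw [← ht, show t = β - algebraMap K L α by simp [β],
        eq_algebraMap_of_aeval_eq_zero h2 h0]
      simp [sq, IsScalarTower.algebraMap_apply F K L]⟩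
  have hαE : algebraMap K L α ∈ F⟮β⟯ := by
    rw [eq_div_of_mul_eq hden (aeval_sq_sub_C_eq_mul_aeval hβ).symm]
    exact div_mem (algebra_adjoin_le_adjoin F {β} (aeval_mem_adjoin_singleton F β))
      (algebra_adjoin_le_adjoin F {β} (aeval_mem_adjoin_singleton F β))
  have htE : t ∈ F⟮β⟯ := by
    simpa [β] using sub_mem (mem_adjoin_simple_self F β) hαE
  have htop : F⟮β⟯ = ⊤ :=
    IntermediateField.eq_top_of_mem_of_adjoin_eq_top adjoinRoot_eq_top adjoinRoot_eq_top hαE htE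
  have := hf.finite_adjoinRoot
  have := (monic_X_pow_sub_C s two_ne_zero).finite_adjoinRoot
  have : Module.Finite F L := .trans K L
  have hint : IsIntegral F β := .of_finite F β
  have hdeg : (minpoly F β).natDegree = 2 * f.natDegree := by
    rw [← adjoin.finrank hint, htop, finrank_top', ← Module.finrank_mul_finrank F K L,
      (AdjoinRoot.isAdjoinRootMonic f hf).finrank,
      (AdjoinRoot.isAdjoinRootMonic _ (monic_X_pow_sub_C s two_ne_zero)).finrank,
      natDegree_X_pow_sub_C, mul_comm]
  exact irreducible_of_aeval_eq_zero_of_natDegree_le hint (ratTransform_quadratic_monic u v hf)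
    hroot (by rw [natDegree_ratTransform_quadratic u v hf, hdeg])

theorem irreducible_ratTransform_iff (h2 : (2 : F) ≠ 0) (hf : f.Monic) (hirr : Irreducible f) :
    Irreducible (ratTransform (X ^ 2 - C (u * v)) (C 2 * X - C (u + v)) f) ↔
      ¬ IsSquare ((root f - algebraMap F (AdjoinRoot f) u) *
        (root f - algebraMap F (AdjoinRoot f) v)) :=
  have := Fact.mk hirr
  ⟨fun hQ hs => not_irreducible_ratTransform_of_isSquare hf hirr.natDegree_pos hs hQ,
    irreducible_ratTransform_of_not_isSquare h2 hf⟩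

end Irreducibility

theorem transform_irreducible_iff_nonsquare_general (F : Type*) [Field F] [Fintype F]
    (hq : Odd (Fintype.card F)) (u v : F)
    (f : F[X]) (hmonic : f.Monic) (hirr : Irreducible f) :
    Irreducible (ratTransform (X ^ 2 - C (u * v)) (C 2 * X - C (u + v)) f)
      ↔ ¬ IsSquare (f.eval u * f.eval v) := by
  have hF : ringChar F ≠ 2 := fun h => by
    have := FiniteField.even_card_iff_char_two.1 h
    rw [Nat.odd_iff] at hq
    omega
  have := Fact.mk hirr
  have := hmonic.finite_adjoinRoot
  have : Finite (AdjoinRoot f) := Module.finite_of_finite F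
  have hnorm : Algebra.norm F ((AdjoinRoot.root f - algebraMap F (AdjoinRoot f) u) *
      (AdjoinRoot.root f - algebraMap F (AdjoinRoot f) v)) = f.eval u * f.eval v := by
    rw [map_mul, AdjoinRoot.norm_root_sub_algebraMap hmonic,
      AdjoinRoot.norm_root_sub_algebraMap hmonic, mul_mul_mul_comm, ← mul_pow, neg_one_mul,
      neg_neg, one_pow, one_mul]
  rw [irreducible_ratTransform_iff (Ring.two_ne_zero hF) hmonic hirr,
    ← FiniteField.isSquare_norm_iff hF, hnorm]

theorem transform_irreducible_iff_nonsquare (F : Type*) [Field F] [Fintype F]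
    (hq : Odd (Fintype.card F)) (u v : F) (huv : u ≠ v)
    (f : F[X]) (hmonic : f.Monic) (hirr : Irreducible f)
    (n : ℕ) (hdeg : f.natDegree = n) (hn : 1 ≤ n) :
    Irreducible (ratTransform (X ^ 2 - C (u * v)) (C 2 * X - C (u + v)) f)
      ↔ ¬ IsSquare (f.eval u * f.eval v) :=
  transform_irreducible_iff_nonsquare_general F hq u v f hmonic hirr
end

section
/- Let F_q be a finite field and G ≤ PGL_2(F_q) a cyclic subgroup of prime order k. Let n > 2 be an integer with k ∤ n. Then every G-orbit of monic irreducible degree-n polynomials over F_q has size exactly k, and consequently ω_G(n,k) = N_q(n)/k, where N_q(n) is the number of monic irreducible polynomials of degree n over F_q. -/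
open Polynomial

/-- `PGL₂(F)`: the quotient of `GL₂(F)` by its center. -/
abbrev PGL2 (F : Type*) [Field F] :=
  GL (Fin 2) F ⧸ Subgroup.center (GL (Fin 2) F)

/-- The class of `A ∈ GL₂(F)` in `PGL₂(F)`. -/
abbrev PGL2.mk {F : Type*} [Field F] (A : GL (Fin 2) F) : PGL2 F :=
  QuotientGroup.mk A

/-- The Möbius function `(ax + b)/(cx + d)` associated to `A ∈ GL₂(F)`, as a
rational function over `F`. -/
noncomputable def mobiusRatFunc {F : Type*} [Field F] (A : GL (Fin 2) F) : RatFunc F :=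
  (RatFunc.C (A.val 0 0) * RatFunc.X + RatFunc.C (A.val 0 1)) /
    (RatFunc.C (A.val 1 0) * RatFunc.X + RatFunc.C (A.val 1 1))

/-- `Q = g/h` is a quotient map for the subgroup `G ≤ PGL₂(F)`: `g, h` are coprime,
`g` is monic of degree `|G|`, `0 ≤ deg h < deg g`, and `Q` is `G`-invariant, i.e.
`Q ∘ ([A] ∘ x) = Q` for all `[A] ∈ G` (equivalently, `F(Q) = F(x)^G`). -/
def IsQuotientMap {F : Type*} [Field F] (G : Subgroup (PGL2 F)) (g h : F[X]) : Prop :=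
  g.Monic ∧ IsCoprime g h ∧ h ≠ 0 ∧ h.natDegree < g.natDegree ∧
    g.natDegree = Nat.card G ∧
    ∀ A : GL (Fin 2) F, PGL2.mk A ∈ G →
      Polynomial.aeval (mobiusRatFunc A) g / Polynomial.aeval (mobiusRatFunc A) h
        = algebraMap F[X] (RatFunc F) g / algebraMap F[X] (RatFunc F) h

/-- `d(Q)` for `Q = g/h`: the largest degree of a monic irreducible polynomial `f`
such that `f^Q` is not squarefree (`0` if no such polynomial exists). -/
noncomputable def dval {F : Type*} [Field F] (g h : F[X]) : ℕ :=
  sSup {n : ℕ | ∃ f : F[X], f.Monic ∧ Irreducible f ∧ f.natDegree = n ∧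
    ¬ Squarefree (ratTransform g h f)}

/-- The (non-normalized) Möbius substitution
`Σ_{i=0}^{deg f} f_i (ax+b)^i (cx+d)^{deg f - i}` of `f` by `A ∈ GL₂(F)`. -/
noncomputable def mobiusSubst {F : Type*} [Field F] (A : GL (Fin 2) F) (f : F[X]) : F[X] :=
  ∑ i ∈ Finset.range (f.natDegree + 1),
    C (f.coeff i) * (C (A.val 0 0) * X + C (A.val 0 1)) ^ i *
      (C (A.val 1 0) * X + C (A.val 1 1)) ^ (f.natDegree - i)

/-- `[A] ∗ f`: the unique monic scalar multiple of the Möbius substitution of `f`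
by `A`. -/
noncomputable def mobiusStar {F : Type*} [Field F] (A : GL (Fin 2) F) (f : F[X]) : F[X] :=
  C ((mobiusSubst A f).leadingCoeff)⁻¹ * mobiusSubst A f

/-- `f ∈ NR_q^G`: `f` is monic and has no root in the `G`-orbit of `∞` under the
Möbius action (the orbit point `[A] ∘ ∞` is `a/c` when `c ≠ 0`, and `∞` — which is
never a root of a monic polynomial — when `c = 0`). -/
def memNR {F : Type*} [Field F] (G : Subgroup (PGL2 F)) (f : F[X]) : Prop :=
  f.Monic ∧ ∀ A : GL (Fin 2) F, PGL2.mk A ∈ G → A.val 1 0 ≠ 0 →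
    f.eval (A.val 0 0 / A.val 1 0) ≠ 0

/-- `G ∗ r`: the `G`-orbit of the polynomial `r` under the `∗` action. -/
def polyOrbit {F : Type*} [Field F] (G : Subgroup (PGL2 F)) (r : F[X]) : Set F[X] :=
  {t : F[X] | ∃ A : GL (Fin 2) F, PGL2.mk A ∈ G ∧ t = mobiusStar A r}

/-- `ω_G(n, k)`: the number of `G`-orbits of size `k` of monic irreducible
polynomials of degree `n` in `NR_q^G`. -/
noncomputable def omegaG {F : Type*} [Field F] (G : Subgroup (PGL2 F)) (n k : ℕ) : ℕ :=
  {O : Set F[X] | ∃ r : F[X], memNR G r ∧ Irreducible r ∧ r.natDegree = n ∧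
    O = polyOrbit G r ∧ O.ncard = k}.ncard

/-!
Writing `f` of degree `n` as the binary form `f̃(X₀, X₁) = X₁ⁿ f(X₀ / X₁)`, the substitution
`Σ fᵢ (ax + b)ⁱ (cx + d)ⁿ⁻ⁱ` is `f̃(A (x, 1)ᵀ)`, so composing substitutions multiplies the
matrices and `∗` is a right action of `PGL₂(F)` on polynomials without roots in `F`, preserving
degree and irreducibility. If `[B] ≠ 1` has prime order `k` and fixes `f`, then `x ↦ [B] ∘ x`
permutes the `n` roots of `f` in cycles of length `1` or `k`; since `k ∤ n` some root `γ` is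
fixed, i.e. `c γ² + (d - a) γ - b = 0`. As `γ` has degree `n > 2` this quadratic vanishes, so `B`
is scalar. Hence stabilizers in `G` are trivial, all orbits have exactly `k` elements, and they
partition the monic irreducible polynomials of degree `n`.
-/

open scoped Matrix

theorem MvPolynomial.IsHomogeneous.aeval_smul {R S σ : Type*} [CommSemiring R] [CommSemiring S]
    [Algebra R S] {φ : MvPolynomial σ R} {n : ℕ} (hφ : φ.IsHomogeneous n) (c : S) (v : σ → S) :
    MvPolynomial.aeval (c • v) φ = c ^ n * MvPolynomial.aeval v φ := by
  simp only [MvPolynomial.aeval_def, MvPolynomial.eval₂_eq, Finset.mul_sum]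
  refine Finset.sum_congr rfl fun d hd => ?_
  have hdeg : ∑ i ∈ d.support, d i = n := by
    rw [← Finsupp.degree_apply, Finsupp.degree_eq_weight_one]
    exact hφ (MvPolynomial.mem_support_iff.mp hd)
  simp only [Pi.smul_apply, smul_eq_mul, mul_pow, Finset.prod_mul_distrib,
    Finset.prod_pow_eq_pow_sum, hdeg]
  ring

theorem MvPolynomial.aeval_aeval_mulVec_X {R S σ : Type*} [CommSemiring R] [CommSemiring S]
    [Algebra R S] [Fintype σ] (M : Matrix σ σ R) (v : σ → S) (p : MvPolynomial σ R) :
    aeval v (aeval (M.map C *ᵥ X) p) = aeval (M.map (algebraMap R S) *ᵥ v) p := by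
  rw [comp_aeval_apply]
  congr 1
  ext i
  simp [Matrix.mulVec, dotProduct]

theorem Polynomial.aeval_homogenize_of_snd_eq_zero {R S : Type*} [CommSemiring R]
    [CommSemiring S] [Algebra R S] (p : R[X]) (n : ℕ) {v : Fin 2 → S} (hv : v 1 = 0) :
    MvPolynomial.aeval v (p.homogenize n) = algebraMap R S (p.coeff n) * v 0 ^ n := by
  induction p using Polynomial.induction_on' with
  | add p q hp hq => simp [hp, hq, add_mul]
  | monomial k r =>
    rcases lt_trichotomy k n with h | rfl | h
    · rw [homogenize_monomial h.le, coeff_monomial, if_neg h.ne]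
      simp [MvPolynomial.aeval_monomial, Finsupp.prod_fintype, hv, Nat.sub_ne_zero_of_lt h]
    · simp [homogenize_monomial le_rfl, MvPolynomial.aeval_monomial, Finsupp.prod_fintype]
    · rw [homogenize_monomial_of_lt h, coeff_monomial, if_neg h.ne']
      simp

theorem Polynomial.aeval_homogenize_eq_zero_iff {R K : Type*} [Field R] [Field K] [Algebra R K]
    {f : R[X]} (hf : f ≠ 0) {v : Fin 2 → K} (hv : v ≠ 0) :
    MvPolynomial.aeval v (f.homogenize f.natDegree) = 0 ↔ v 1 ≠ 0 ∧ aeval (v 0 / v 1) f = 0 := by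
  by_cases hv1 : v 1 = 0
  · have hv0 : v 0 ≠ 0 := fun hv0 => hv (by ext i; fin_cases i <;> assumption)
    simp [aeval_homogenize_of_snd_eq_zero _ _ hv1, hv0, hv1, hf]
  · rw [MvPolynomial.aeval_def, ← MvPolynomial.eval_map, ← homogenize_map,
      eval_homogenize natDegree_map_le _ hv1, aeval_def, eval_map]
    simp [hv1]

theorem Polynomial.finite_setOf_natDegree_le {R : Type*} [Semiring R] [Finite R] (n : ℕ) :
    {f : R[X] | f.natDegree ≤ n}.Finite := by
  have : Finite (degreeLT R (n + 1)) := .of_equiv _ (degreeLTEquiv R (n + 1)).toEquiv.symm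
  refine (Set.toFinite (degreeLT R (n + 1) : Set R[X])).subset fun f hf => ?_
  exact mem_degreeLT.mpr ((degree_le_of_natDegree_le hf).trans_lt
    (by exact_mod_cast n.lt_succ_self))

theorem Irreducible.not_isRoot {R : Type*} [Field R] {f : R[X]} (hf : Irreducible f)
    (hdeg : f.natDegree ≠ 1) (x : R) : ¬ f.IsRoot x := fun hx =>
  hdeg (natDegree_eq_of_degree_eq_some (degree_eq_one_of_irreducible_of_root hf hx))

theorem Matrix.GeneralLinearGroup.mulVec_ne_zero {n K : Type*} [Fintype n] [DecidableEq n]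
    [Field K] (A : GL n K) {v : n → K} (hv : v ≠ 0) : (A : Matrix n n K) *ᵥ v ≠ 0 := fun h =>
  hv (Matrix.mulVec_injective_iff_isUnit.mpr A.isUnit (h.trans (Matrix.mulVec_zero _).symm))

theorem Set.ncard_eq_ncard_image_mul {α β : Type*} {S : Set α} (hS : S.Finite) (f : α → β)
    {k : ℕ} (hk : ∀ a ∈ S, {b ∈ S | f b = f a}.ncard = k) : S.ncard = (f '' S).ncard * k := by
  classical
  have himage : (f '' S).ncard = (hS.toFinset.image f).card := by
    rw [← Set.ncard_coe_finset, Finset.coe_image, hS.coe_toFinset]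
  rw [Set.ncard_eq_toFinset_card S hS, Finset.card_eq_sum_card_image f hS.toFinset, himage,
    Finset.sum_congr rfl (g := fun _ => k), Finset.sum_const, smul_eq_mul]
  intro b hb
  obtain ⟨a, ha, rfl⟩ := Finset.mem_image.mp hb
  rw [← hk a (hS.mem_toFinset.mp ha), ← Set.ncard_coe_finset]
  congr 1
  ext b
  simp

section MobiusPoint

variable {F : Type*} [Field F]

noncomputable def mobiusVec {S : Type*} [CommRing S] [Algebra F S] (A : GL (Fin 2) F) (x : S) :
    Fin 2 → S :=
  (A : Matrix (Fin 2) (Fin 2) F).map (algebraMap F S) *ᵥ ![x, 1]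

/-- `[A] ∘ x = (ax + b) / (cx + d)`, with the junk value `0` at the pole `cx + d = 0`. -/
noncomputable def mobiusPt {K : Type*} [Field K] [Algebra F K] (A : GL (Fin 2) F) (x : K) : K :=
  mobiusVec A x 0 / mobiusVec A x 1

section CommRing

variable {S : Type*} [CommRing S] [Algebra F S]

theorem mobiusVec_mul (A B : GL (Fin 2) F) (x : S) :
    mobiusVec (A * B) x
      = (A : Matrix (Fin 2) (Fin 2) F).map (algebraMap F S) *ᵥ mobiusVec B x := by
  rw [mobiusVec, mobiusVec, Units.val_mul, Matrix.map_mul, Matrix.mulVec_mulVec]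

theorem mobiusVec_scalar (u : Fˣ) (x : S) :
    mobiusVec (Matrix.GeneralLinearGroup.scalar (Fin 2) u) x = algebraMap F S u • ![x, 1] := by
  ext i
  fin_cases i <;> simp [mobiusVec, Matrix.mulVec, dotProduct]

theorem mobiusVec_mul_scalar (A : GL (Fin 2) F) (u : Fˣ) (x : S) :
    mobiusVec (A * Matrix.GeneralLinearGroup.scalar (Fin 2) u) x
      = algebraMap F S u • mobiusVec A x := by
  rw [mobiusVec_mul, mobiusVec_scalar, Matrix.mulVec_smul]
  rfl

end CommRing

variable {K : Type*} [Field K] [Algebra F K]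

theorem mobiusVec_ne_zero (A : GL (Fin 2) F) (x : K) : mobiusVec A x ≠ 0 :=
  (Matrix.GeneralLinearGroup.map (algebraMap F K) A).mulVec_ne_zero (by simp [funext_iff])

theorem mobiusPt_one (x : K) : mobiusPt (1 : GL (Fin 2) F) x = x := by
  simp [mobiusPt, mobiusVec]

theorem mobiusPt_scalar (u : Fˣ) (x : K) :
    mobiusPt (Matrix.GeneralLinearGroup.scalar (Fin 2) u) x = x := by
  simp [mobiusPt, mobiusVec_scalar]

theorem mobiusPt_mul (A B : GL (Fin 2) F) {x : K} (hx : mobiusVec B x 1 ≠ 0) :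
    mobiusPt A (mobiusPt B x) = mobiusPt (A * B) x := by
  set t := mobiusVec B x 1
  have hB : mobiusVec B x = t • ![mobiusPt B x, 1] := by
    ext i
    fin_cases i <;> simp [t, mobiusPt, mul_div_cancel₀ _ hx]
  have hAB : mobiusVec (A * B) x = t • mobiusVec A (mobiusPt B x) := by
    rw [mobiusVec_mul, hB, Matrix.mulVec_smul]
    rfl
  simp only [mobiusPt, hAB, Pi.smul_apply, smul_eq_mul, mul_div_mul_left _ _ hx]

theorem mobiusPt_mem {E : IntermediateField F K} (A : GL (Fin 2) F) {x : K} (hx : x ∈ E) :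
    mobiusPt A x ∈ E := by
  have hvec : ∀ i, mobiusVec A x i ∈ E := fun i => by
    simpa [mobiusVec, Matrix.mulVec, dotProduct] using
      add_mem (mul_mem (E.algebraMap_mem _) hx) (E.algebraMap_mem _)
  exact div_mem (hvec 0) (hvec 1)

theorem mem_center_of_mobiusVec_eq {B : GL (Fin 2) F} {x : K}
    (hx : 2 < (minpoly F x).natDegree) (h : mobiusVec B x 0 = x * mobiusVec B x 1) :
    B ∈ Subgroup.center (GL (Fin 2) F) := by
  set Q : F[X] := C (B 1 0) * X ^ 2 + C (B 1 1 - B 0 0) * X + C (-B 0 1)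
  have hQ : aeval x Q = 0 := by
    simp only [mobiusVec, Matrix.mulVec, dotProduct, Matrix.map_apply, Fin.sum_univ_two,
      Matrix.cons_val_zero, Matrix.cons_val_one, mul_one] at h
    simp only [Q, map_add, map_mul, map_neg, map_sub, map_pow, aeval_C, aeval_X]
    linear_combination -h
  have hQ0 : Q = 0 :=
    eq_zero_of_dvd_of_natDegree_lt (minpoly.dvd F x hQ) (natDegree_quadratic_le.trans_lt hx)
  have hc : B 1 0 = 0 := by simpa [Q] using congrArg (coeff · 2) hQ0
  have hda : B 1 1 - B 0 0 = 0 := by simpa [Q] using congrArg (coeff · 1) hQ0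
  have hb : B 0 1 = 0 := by simpa [Q] using congrArg (coeff · 0) hQ0
  rw [Matrix.GeneralLinearGroup.mem_center_iff_val_mem_range_scalar]
  refine ⟨B 0 0, ?_⟩
  ext i j
  fin_cases i <;> fin_cases j <;> simp [hb, hc, sub_eq_zero.mp hda]

end MobiusPoint

section MobiusSubst

variable {F : Type*} [Field F]

theorem mobiusSubst_eq_aeval_homogenize (A : GL (Fin 2) F) (f : F[X]) :
    mobiusSubst A f = MvPolynomial.aeval (mobiusVec A (X : F[X])) (f.homogenize f.natDegree) := by
  simp only [mobiusSubst, homogenize, map_sum, MvPolynomial.aeval_monomial,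
    Finset.Nat.sum_antidiagonal_eq_sum_range_succ_mk]
  refine Finset.sum_congr rfl fun i _ => ?_
  simp [Finsupp.prod_fintype, mobiusVec, Matrix.mulVec, dotProduct, mul_assoc]

theorem aeval_mobiusSubst {S : Type*} [CommRing S] [Algebra F S] (A : GL (Fin 2) F) (f : F[X])
    (x : S) :
    aeval x (mobiusSubst A f) = MvPolynomial.aeval (mobiusVec A x) (f.homogenize f.natDegree) := by
  rw [mobiusSubst_eq_aeval_homogenize, MvPolynomial.comp_aeval_apply]
  congr 1
  ext i
  fin_cases i <;> simp [mobiusVec, Matrix.mulVec, dotProduct]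

theorem homogenize_mobiusSubst (A : GL (Fin 2) F) (f : F[X]) :
    (mobiusSubst A f).homogenize f.natDegree = MvPolynomial.aeval
      ((A : Matrix (Fin 2) (Fin 2) F).map MvPolynomial.C *ᵥ MvPolynomial.X)
      (f.homogenize f.natDegree) := by
  apply homogenize_eq_of_isHomogeneous
  · have hlin : ∀ i, (((A : Matrix (Fin 2) (Fin 2) F).map MvPolynomial.C *ᵥ MvPolynomial.X) i
        : MvPolynomial (Fin 2) F).IsHomogeneous 1 := fun i =>
      MvPolynomial.IsHomogeneous.sum _ _ _ fun j _ => MvPolynomial.isHomogeneous_C_mul_X _ _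
    simpa using (isHomogeneous_homogenize f).aeval _ hlin
  · rw [MvPolynomial.aeval_aeval_mulVec_X, mobiusSubst_eq_aeval_homogenize]
    rfl

theorem mobiusSubst_mobiusSubst (A B : GL (Fin 2) F) {f : F[X]}
    (hf : (mobiusSubst A f).natDegree = f.natDegree) :
    mobiusSubst B (mobiusSubst A f) = mobiusSubst (A * B) f := by
  rw [mobiusSubst_eq_aeval_homogenize B, hf, homogenize_mobiusSubst,
    MvPolynomial.aeval_aeval_mulVec_X, ← mobiusVec_mul, mobiusSubst_eq_aeval_homogenize]

theorem mobiusSubst_C_mul (A : GL (Fin 2) F) {c : F} (hc : c ≠ 0) (f : F[X]) :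
    mobiusSubst A (C c * f) = C c * mobiusSubst A f := by
  rw [mobiusSubst_eq_aeval_homogenize, mobiusSubst_eq_aeval_homogenize, natDegree_C_mul hc,
    homogenize_C_mul, map_mul, MvPolynomial.aeval_C, algebraMap_eq]

theorem coeff_mobiusSubst_natDegree (A : GL (Fin 2) F) (f : F[X]) :
    (mobiusSubst A f).coeff f.natDegree = MvPolynomial.aeval
      ((A : Matrix (Fin 2) (Fin 2) F) *ᵥ ![1, 0]) (f.homogenize f.natDegree) := by
  have h := congrArg (MvPolynomial.aeval (R := F) ![(1 : F), 0]) (homogenize_mobiusSubst A f)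
  rw [aeval_homogenize_of_snd_eq_zero _ _ rfl, MvPolynomial.aeval_aeval_mulVec_X,
    Algebra.algebraMap_self, RingHom.coe_id, Matrix.map_id] at h
  simpa using h

theorem natDegree_mobiusSubst_le (A : GL (Fin 2) F) (f : F[X]) :
    (mobiusSubst A f).natDegree ≤ f.natDegree := by
  refine natDegree_sum_le_of_forall_le _ _ fun i hi => ?_
  have hi : i ≤ f.natDegree := Nat.lt_succ_iff.mp (Finset.mem_range.mp hi)
  refine (natDegree_mul_le_of_le (natDegree_mul_le_of_le (natDegree_C _).le
    (natDegree_pow_le_of_le i natDegree_linear_le))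
    (natDegree_pow_le_of_le (f.natDegree - i) natDegree_linear_le)).trans ?_
  omega

theorem mobiusSubst_eq_C_mul_mobiusStar (A : GL (Fin 2) F) (f : F[X]) :
    mobiusSubst A f = C (mobiusSubst A f).leadingCoeff * mobiusStar A f := by
  rcases eq_or_ne (mobiusSubst A f) 0 with h | h
  · simp [mobiusStar, h]
  · rw [mobiusStar, ← mul_assoc, ← C_mul, mul_inv_cancel₀ (leadingCoeff_ne_zero.mpr h), C_1,
      one_mul]

theorem C_inv_leadingCoeff_mul_C_mul {c : F} (hc : c ≠ 0) (p : F[X]) :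
    C (C c * p).leadingCoeff⁻¹ * (C c * p) = C p.leadingCoeff⁻¹ * p := by
  rw [leadingCoeff_mul, leadingCoeff_C, mul_inv, C_mul, mul_mul_mul_comm, ← C_mul,
    inv_mul_cancel₀ hc, C_1, one_mul]

theorem mobiusStar_C_mul (A : GL (Fin 2) F) {c : F} (hc : c ≠ 0) (f : F[X]) :
    mobiusStar A (C c * f) = mobiusStar A f := by
  rw [mobiusStar, mobiusSubst_C_mul A hc, C_inv_leadingCoeff_mul_C_mul hc, mobiusStar]

theorem mobiusStar_one {f : F[X]} (hf : f.Monic) : mobiusStar 1 f = f := by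
  have h : mobiusSubst 1 f = f := by
    conv_rhs => rw [← aeval_homogenize_X_one f le_rfl]
    rw [mobiusSubst_eq_aeval_homogenize]
    congr 1
    ext i
    fin_cases i <;> simp [mobiusVec]
  rw [mobiusStar, h, hf.leadingCoeff, inv_one, C_1, one_mul]

theorem mobiusStar_mul_scalar (A : GL (Fin 2) F) (u : Fˣ) (f : F[X]) :
    mobiusStar (A * Matrix.GeneralLinearGroup.scalar (Fin 2) u) f = mobiusStar A f := by
  have h : mobiusSubst (A * Matrix.GeneralLinearGroup.scalar (Fin 2) u) f
      = C ((u : F) ^ f.natDegree) * mobiusSubst A f := by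
    rw [mobiusSubst_eq_aeval_homogenize, mobiusSubst_eq_aeval_homogenize, mobiusVec_mul_scalar,
      (isHomogeneous_homogenize f).aeval_smul, algebraMap_eq, C_pow]
  rw [mobiusStar, h, C_inv_leadingCoeff_mul_C_mul (pow_ne_zero _ u.ne_zero), mobiusStar]

theorem mobiusStar_eq_of_mk_eq {A B : GL (Fin 2) F} (h : PGL2.mk A = PGL2.mk B) (f : F[X]) :
    mobiusStar A f = mobiusStar B f := by
  obtain ⟨u, hu⟩ : A⁻¹ * B ∈ (Matrix.GeneralLinearGroup.scalar (Fin 2)).range := by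
    rw [← Matrix.GeneralLinearGroup.center_eq_range_scalar]
    exact QuotientGroup.eq.mp h
  rw [show B = A * Matrix.GeneralLinearGroup.scalar (Fin 2) u by rw [hu, mul_inv_cancel_left],
    mobiusStar_mul_scalar]

section NoRoots

variable {f : F[X]} (hf0 : f ≠ 0) (hf : ∀ x, ¬ f.IsRoot x)
include hf0 hf

theorem coeff_mobiusSubst_natDegree_ne_zero (A : GL (Fin 2) F) :
    (mobiusSubst A f).coeff f.natDegree ≠ 0 := by
  have hv := A.mulVec_ne_zero (v := ![1, 0]) (by simp [funext_iff])
  rw [coeff_mobiusSubst_natDegree, ne_eq, aeval_homogenize_eq_zero_iff hf0 hv]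
  exact fun h => hf _ (by simpa using h.2)

theorem natDegree_mobiusSubst (A : GL (Fin 2) F) : (mobiusSubst A f).natDegree = f.natDegree :=
  (natDegree_mobiusSubst_le A f).antisymm
    (le_natDegree_of_ne_zero (coeff_mobiusSubst_natDegree_ne_zero hf0 hf A))

theorem mobiusSubst_ne_zero (A : GL (Fin 2) F) : mobiusSubst A f ≠ 0 := fun h =>
  coeff_mobiusSubst_natDegree_ne_zero hf0 hf A (by rw [h, coeff_zero])

theorem mobiusStar_monic (A : GL (Fin 2) F) : (mobiusStar A f).Monic := by
  rw [mobiusStar, Monic, leadingCoeff_mul, leadingCoeff_C,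
    inv_mul_cancel₀ (leadingCoeff_ne_zero.mpr (mobiusSubst_ne_zero hf0 hf A))]

theorem natDegree_mobiusStar (A : GL (Fin 2) F) : (mobiusStar A f).natDegree = f.natDegree := by
  rw [mobiusStar, natDegree_C_mul (inv_ne_zero (leadingCoeff_ne_zero.mpr
    (mobiusSubst_ne_zero hf0 hf A))), natDegree_mobiusSubst hf0 hf]

theorem mobiusStar_mobiusStar (A B : GL (Fin 2) F) :
    mobiusStar B (mobiusStar A f) = mobiusStar (A * B) f :=
  calc mobiusStar B (mobiusStar A f) = mobiusStar B (mobiusSubst A f) :=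
        mobiusStar_C_mul B (inv_ne_zero (leadingCoeff_ne_zero.mpr (mobiusSubst_ne_zero hf0 hf A))) _
    _ = mobiusStar (A * B) f := by
        rw [mobiusStar, mobiusSubst_mobiusSubst A B (natDegree_mobiusSubst hf0 hf A), mobiusStar]

end NoRoots

variable {K : Type*} [Field K] [Algebra F K]

theorem aeval_mobiusSubst_eq_zero_iff {f : F[X]} (hf : f ≠ 0) (A : GL (Fin 2) F) (x : K) :
    aeval x (mobiusSubst A f) = 0 ↔ mobiusVec A x 1 ≠ 0 ∧ aeval (mobiusPt A x) f = 0 := by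
  rw [aeval_mobiusSubst]
  exact aeval_homogenize_eq_zero_iff hf (mobiusVec_ne_zero A x)

theorem aeval_mobiusPt_eq_zero_of_mobiusStar_eq {f : F[X]} (hf : f ≠ 0) {B : GL (Fin 2) F}
    (hfix : mobiusStar B f = f) {x : K} (hx : aeval x f = 0) :
    mobiusVec B x 1 ≠ 0 ∧ aeval (mobiusPt B x) f = 0 := by
  rw [← aeval_mobiusSubst_eq_zero_iff hf, mobiusSubst_eq_C_mul_mobiusStar, hfix, map_mul, hx,
    mul_zero]

open IntermediateField in
/-- A root `γ` of `[A] ∗ f` generates the root `[A] ∘ γ` of `f`, so its degree is at least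
`deg f = deg ([A] ∗ f)`: hence `[A] ∗ f` is the minimal polynomial of `γ`. -/
theorem irreducible_mobiusStar {f : F[X]} (hm : f.Monic) (hf : Irreducible f)
    (hroot : ∀ x, ¬ f.IsRoot x) (A : GL (Fin 2) F) : Irreducible (mobiusStar A f) := by
  set g := mobiusStar A f
  have hg : g.Monic := mobiusStar_monic hf.ne_zero hroot A
  have hgdeg : g.natDegree = f.natDegree := natDegree_mobiusStar hf.ne_zero hroot A
  obtain ⟨γ, hγ⟩ := IsAlgClosed.exists_aeval_eq_zero (AlgebraicClosure F) g
    (by rw [degree_eq_natDegree hg.ne_zero, hgdeg]; exact_mod_cast hf.natDegree_pos.ne')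
  have hγint : IsIntegral F γ := Algebra.IsIntegral.isIntegral γ
  have hβ : aeval (mobiusPt A γ) f = 0 := by
    refine ((aeval_mobiusSubst_eq_zero_iff hf.ne_zero A γ).mp ?_).2
    rw [mobiusSubst_eq_C_mul_mobiusStar, map_mul, hγ, mul_zero]
  have hβmem := mobiusPt_mem A (mem_adjoin_simple_self F γ)
  have : FiniteDimensional F F⟮γ⟯ := adjoin.finiteDimensional hγint
  have hle : f.natDegree ≤ (minpoly F γ).natDegree :=
    calc f.natDegree = (minpoly F (⟨_, hβmem⟩ : F⟮γ⟯)).natDegree := by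
          rw [← minpoly.eq_of_irreducible_of_monic hf ?_ hm]
          exact Subtype.ext (by rw [← aeval_coe]; exact hβ)
      _ ≤ Module.finrank F F⟮γ⟯ := minpoly.natDegree_le _
      _ = (minpoly F γ).natDegree := adjoin.finrank hγint
  rw [eq_of_monic_of_dvd_of_natDegree_le (minpoly.monic hγint) hg (minpoly.dvd F γ hγ)
    (hgdeg.trans_le hle)]
  exact minpoly.irreducible hγint

end MobiusSubst

section Stabilizer

variable {F : Type*} [Field F] [PerfectField F]

theorem exists_root_mobiusVec_eq {k : ℕ} (hk : k.Prime) {B : GL (Fin 2) F}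
    (hB : PGL2.mk B ^ k = 1) {f : F[X]} (hf : Irreducible f) (hdvd : ¬ k ∣ f.natDegree)
    (hfix : mobiusStar B f = f) :
    ∃ γ ∈ f.rootSet (AlgebraicClosure F), mobiusVec B γ 0 = γ * mobiusVec B γ 1 := by
  classical
  set R := f.rootSet (AlgebraicClosure F)
  have hmaps : ∀ γ ∈ R, mobiusVec B γ 1 ≠ 0 ∧ mobiusPt B γ ∈ R := fun γ hγ => by
    obtain ⟨hden, hβ⟩ := aeval_mobiusPt_eq_zero_of_mobiusStar_eq hf.ne_zero hfix
      (mem_rootSet.mp hγ).2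
    exact ⟨hden, mem_rootSet.mpr ⟨hf.ne_zero, hβ⟩⟩
  let σ : Function.End R := fun γ => ⟨mobiusPt B γ, (hmaps γ γ.2).2⟩
  have hσpow : ∀ j (γ : R), ((σ ^ j) γ : AlgebraicClosure F) = mobiusPt (B ^ j) γ.1 := by
    intro j
    induction j with
    | zero => exact fun γ => (mobiusPt_one γ.1).symm
    | succ j ih =>
      intro γ
      rw [pow_succ, pow_succ, ← mobiusPt_mul _ _ (hmaps γ γ.2).1]
      exact ih (σ γ)
  obtain ⟨u, hu⟩ : B ^ k ∈ (Matrix.GeneralLinearGroup.scalar (Fin 2)).range := by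
    rw [← Matrix.GeneralLinearGroup.center_eq_range_scalar, ← QuotientGroup.eq_one_iff]
    exact hB
  have hσk : σ ^ k ^ 1 = 1 := by
    refine funext fun γ => Subtype.ext ?_
    rw [pow_one, hσpow, ← hu, mobiusPt_scalar]
    rfl
  have : Fact k.Prime := ⟨hk⟩
  have hcard := Equiv.Perm.card_fixedPoints_modEq hσk
  rw [card_rootSet_eq_natDegree (PerfectField.separable_of_irreducible hf) (IsAlgClosed.splits _)]
    at hcard
  obtain ⟨⟨γ, hγR⟩, hγ⟩ : (Function.fixedPoints σ).Nonempty := by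
    by_contra h
    rw [Fintype.card_eq_zero_iff.mpr
      (Set.isEmpty_coe_sort.mpr (Set.not_nonempty_iff_eq_empty.mp h))] at hcard
    exact hdvd (Nat.modEq_zero_iff_dvd.mp hcard)
  refine ⟨γ, hγR, ?_⟩
  rw [← div_eq_iff (hmaps γ hγR).1]
  exact congrArg Subtype.val hγ

theorem mk_eq_one_of_mobiusStar_eq_self {k : ℕ} (hk : k.Prime) {B : GL (Fin 2) F}
    (hB : PGL2.mk B ^ k = 1) {f : F[X]} (hm : f.Monic) (hf : Irreducible f)
    (hn : 2 < f.natDegree) (hdvd : ¬ k ∣ f.natDegree) (hfix : mobiusStar B f = f) :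
    PGL2.mk B = 1 := by
  obtain ⟨γ, hγ, hfixγ⟩ := exists_root_mobiusVec_eq hk hB hf hdvd hfix
  rw [QuotientGroup.eq_one_iff]
  refine mem_center_of_mobiusVec_eq ?_ hfixγ
  rwa [← minpoly.eq_of_irreducible_of_monic hf (mem_rootSet.mp hγ).2 hm]

end Stabilizer

section Orbit

variable {F : Type*} [Field F] {G : Subgroup (PGL2 F)}

theorem mem_polyOrbit_self {f : F[X]} (hf : f.Monic) : f ∈ polyOrbit G f :=
  ⟨1, one_mem G, (mobiusStar_one hf).symm⟩

theorem polyOrbit_mobiusStar {f : F[X]} (hf0 : f ≠ 0) (hf : ∀ x, ¬ f.IsRoot x)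
    {A : GL (Fin 2) F} (hA : PGL2.mk A ∈ G) : polyOrbit G (mobiusStar A f) = polyOrbit G f := by
  ext t
  constructor
  · rintro ⟨B, hB, rfl⟩
    exact ⟨A * B, mul_mem hA hB, mobiusStar_mobiusStar hf0 hf A B⟩
  · rintro ⟨B, hB, rfl⟩
    refine ⟨A⁻¹ * B, mul_mem (inv_mem hA) hB, ?_⟩
    rw [mobiusStar_mobiusStar hf0 hf, mul_inv_cancel_left]

theorem polyOrbit_eq_range (G : Subgroup (PGL2 F)) (f : F[X]) :
    polyOrbit G f = Set.range fun g : G => mobiusStar (g : PGL2 F).out f := by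
  ext t
  constructor
  · rintro ⟨A, hA, rfl⟩
    exact ⟨⟨_, hA⟩, mobiusStar_eq_of_mk_eq (QuotientGroup.out_eq' _) f⟩
  · rintro ⟨g, rfl⟩
    exact ⟨_, by rw [PGL2.mk, QuotientGroup.out_eq']; exact g.2, rfl⟩

theorem ncard_polyOrbit [PerfectField F] {k : ℕ} (hk : k.Prime) (hG : Nat.card G = k)
    {f : F[X]} (hm : f.Monic) (hf : Irreducible f) (hn : 2 < f.natDegree)
    (hdvd : ¬ k ∣ f.natDegree) : (polyOrbit G f).ncard = k := by
  have hroot := hf.not_isRoot (by omega)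
  rw [polyOrbit_eq_range, ← Nat.card_coe_set_eq, Nat.card_range_of_injective, hG]
  intro g₁ g₂ h
  set A₁ := (g₁ : PGL2 F).out
  set A₂ := (g₂ : PGL2 F).out
  replace h : mobiusStar A₁ f = mobiusStar A₂ f := h
  have hfix : mobiusStar (A₂ * A₁⁻¹) f = f := by
    rw [← mobiusStar_mobiusStar hf.ne_zero hroot, ← h, mobiusStar_mobiusStar hf.ne_zero hroot,
      mul_inv_cancel, mobiusStar_one hm]
  have hmk : PGL2.mk (A₂ * A₁⁻¹) = g₂ * (g₁ : PGL2 F)⁻¹ := by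
    rw [PGL2.mk, QuotientGroup.mk_mul, QuotientGroup.mk_inv, QuotientGroup.out_eq',
      QuotientGroup.out_eq']
  have hmem : PGL2.mk (A₂ * A₁⁻¹) ∈ G := hmk ▸ mul_mem g₂.2 (inv_mem g₁.2)
  have hpow : PGL2.mk (A₂ * A₁⁻¹) ^ k = 1 :=
    orderOf_dvd_iff_pow_eq_one.mp (hG ▸ G.orderOf_dvd_natCard hmem)
  have h1 := mk_eq_one_of_mobiusStar_eq_self hk hpow hm hf hn hdvd hfix
  rw [hmk, mul_inv_eq_one] at h1
  exact (Subtype.ext h1).symm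

variable {n : ℕ} (hn : 2 ≤ n)
include hn

theorem sep_polyOrbit_eq {f : F[X]}
    (hf : f ∈ {f : F[X] | f.Monic ∧ Irreducible f ∧ f.natDegree = n}) :
    {g ∈ {f : F[X] | f.Monic ∧ Irreducible f ∧ f.natDegree = n} | polyOrbit G g = polyOrbit G f}
      = polyOrbit G f := by
  obtain ⟨hm, hirr, hdeg⟩ := hf
  have hroot := hirr.not_isRoot (by omega)
  ext g
  constructor
  · rintro ⟨⟨hgm, -⟩, hg⟩
    exact hg ▸ mem_polyOrbit_self hgm
  · rintro ⟨A, hA, rfl⟩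
    exact ⟨⟨mobiusStar_monic hirr.ne_zero hroot A, irreducible_mobiusStar hm hirr hroot A,
      (natDegree_mobiusStar hirr.ne_zero hroot A).trans hdeg⟩,
      polyOrbit_mobiusStar hirr.ne_zero hroot hA⟩

theorem omegaG_eq_ncard_image {k : ℕ} (hk : ∀ f : F[X], f.Monic → Irreducible f →
      f.natDegree = n → (polyOrbit G f).ncard = k) :
    omegaG G n k
      = (polyOrbit G '' {f : F[X] | f.Monic ∧ Irreducible f ∧ f.natDegree = n}).ncard := by
  rw [omegaG]
  congr 1
  ext O
  constructor
  · rintro ⟨r, hr, hirr, hdeg, rfl, -⟩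
    exact ⟨r, ⟨hr.1, hirr, hdeg⟩, rfl⟩
  · rintro ⟨r, ⟨hm, hirr, hdeg⟩, rfl⟩
    exact ⟨r, ⟨hm, fun _ _ _ => hirr.not_isRoot (by omega) _⟩, hirr, hdeg, rfl,
      hk r hm hirr hdeg⟩

end Orbit

theorem orbit_size_eq_card_and_omega_general (F : Type*) [Field F] [Fintype F]
    (G : Subgroup (PGL2 F)) (k : ℕ) (hk : k.Prime) (hG : Nat.card G = k)
    (n : ℕ) (hn : 2 < n) (hdvd : ¬ k ∣ n) :
    (∀ f : F[X], f.Monic → Irreducible f → f.natDegree = n →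
        (polyOrbit G f).ncard = k)
      ∧ omegaG G n k * k
          = {f : F[X] | f.Monic ∧ Irreducible f ∧ f.natDegree = n}.ncard := by
  have horbit : ∀ f : F[X], f.Monic → Irreducible f → f.natDegree = n →
      (polyOrbit G f).ncard = k := fun f hm hf hfn =>
    ncard_polyOrbit hk hG hm hf (hfn ▸ hn) (hfn ▸ hdvd)
  refine ⟨horbit, ?_⟩
  have hfin : {f : F[X] | f.Monic ∧ Irreducible f ∧ f.natDegree = n}.Finite :=
    (finite_setOf_natDegree_le n).subset fun f hf => hf.2.2.le
  rw [omegaG_eq_ncard_image hn.le horbit,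
    Set.ncard_eq_ncard_image_mul hfin (polyOrbit G) fun f hf => ?_]
  rw [sep_polyOrbit_eq hn.le hf]
  exact horbit f hf.1 hf.2.1 hf.2.2

theorem orbit_size_eq_card_and_omega (F : Type*) [Field F] [Fintype F]
    (G : Subgroup (PGL2 F)) (k : ℕ) (hk : k.Prime) (hG : Nat.card G = k)
    (hcyc : IsCyclic ↥G) (n : ℕ) (hn : 2 < n) (hdvd : ¬ k ∣ n) :
    (∀ f : F[X], f.Monic → Irreducible f → f.natDegree = n →
        (polyOrbit G f).ncard = k)
      ∧ omegaG G n k * k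
          = {f : F[X] | f.Monic ∧ Irreducible f ∧ f.natDegree = n}.ncard :=
  orbit_size_eq_card_and_omega_general F G k hk hG n hn hdvd
end
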